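/- Let ξ* be a point with ∇_ξ L(θ*(ξ*), ξ*) = 0, where L(θ, ξ) = J(θ) + Σ_s d(s)·λ_ξ(s)·g(s, θ) with d(s) > 0 on the support. If there exists a state s₀ in the support with g(s₀, θ*) > 0 and ∇_ξ λ_ξ(s₀) ≠ 0 while g(s, θ*) = 0 for all other support states, then we obtain a contradiction; hence at a stationary point of the multiplier update, g(s, θ*) ≤ 0 must hold for every state s in the support (stationarity of the multiplier implies primal feasibility). -/
import Mathlib


/-- stationarity of the multiplier update contradicts strict infeasibility at a
support state with nonvanishing multiplier gradient (stationarity implies primal feasibility). -/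
theorem stmt_10 {S : Type*} [Fintype S] {q : ℕ}
    (d : S → ℝ) (g : S → ℝ) (v : S → EuclideanSpace ℝ (Fin q))
    (hstat : ∑ s, (d s * g s) • v s = 0)
    (s₀ : S) (hd₀ : 0 < d s₀) (hg₀ : 0 < g s₀) (hv₀ : v s₀ ≠ 0)
    (hothers : ∀ s, s ≠ s₀ → 0 < d s → g s = 0)
    (hsupp : ∀ s, 0 ≤ d s) :
    False := by
  have hsum : ∑ s, (d s * g s) • v s = (d s₀ * g s₀) • v s₀ := by
    apply Finset.sum_eq_single
    · intro s _ hs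
      rcases (hsupp s).lt_or_eq with hlt | heq
      · rw [hothers s hs hlt, mul_zero, zero_smul]
      · rw [← heq, zero_mul, zero_smul]
    · intro h; exact absurd (Finset.mem_univ s₀) h
  rw [hsum] at hstat
  rcases smul_eq_zero.mp hstat with h | h
  · exact absurd h (mul_pos hd₀ hg₀).ne'
  · exact hv₀ h
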